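/- Fix integers d, u, v, let γ be an integer and let c be a positive integer with gcd(c, 2γ) = 1. Then |S_c(γ)| ≤ c^{3/2} · gcd(v, c). -/

import Mathlib

/-- `e_c(z) = exp(2πiz/c)`, well defined on residue classes mod `c`. -/
noncomputable def ec (c : ℕ) (z : ZMod c) : ℂ :=
  Complex.exp (2 * Real.pi * Complex.I * (z.val : ℂ) / (c : ℂ))

/-- The Kloosterman sum `S(n,m;c) = ∑_{x ∈ (ℤ/cℤ)ˣ} e_c(nx + m x⁻¹)`. -/
noncomputable def Kloos (c : ℕ) [NeZero c] (n m : ZMod c) : ℂ :=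
  ∑ x : (ZMod c)ˣ, ec c (n * (x : ZMod c) + m * ((x⁻¹ : (ZMod c)ˣ) : ZMod c))

/-- The twisted sum
`S_c(γ) = ∑_{a,b (c)} S(a(γa+d), b(γb+d); c) · e_c(2γab + (d+u)a + (d+v)b)`. -/
noncomputable def Sc (c : ℕ) [NeZero c] (d u v : ℤ) (γ : ℤ) : ℂ :=
  ∑ a : ZMod c, ∑ b : ZMod c,
    Kloos c (a * (γ * a + d)) (b * (γ * b + d)) *
      ec c (2 * γ * a * b + (d + u) * a + (d + v) * b)

/-!
Opening the Kloosterman sum and shifting `a ↦ a - x⁻¹ b` separates the variables: for each unit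
`x` the sum over `a` is a quadratic Gauss sum with leading coefficient `γ x`, of modulus `√c`
since `2 γ x` is a unit, while the sum over `b` is `c` times the indicator of `v x = u`.
So `|S_c(γ)| ≤ c^{3/2} · #{x | v x = u}`, and the solutions of `v x = u`, when there are any,
form a coset of the kernel of multiplication by `v`, which is the `gcd(v, c)`-torsion of `ℤ/cℤ`.
-/

open Finset

namespace AddChar

variable {R : Type*} [CommRing R] [Fintype R] {ψ : AddChar R ℂ}

lemma mul_conj_sum_quadratic (hψ : ψ.IsPrimitive) {t : R} (ht : IsUnit (2 * t)) (s : R) :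
    (∑ a, ψ (t * a ^ 2 + s * a)) * starRingEnd ℂ (∑ a, ψ (t * a ^ 2 + s * a)) =
      Fintype.card R := by
  classical
  have shift (h a' : R) :
      ψ (t * (h + a') ^ 2 + s * (h + a')) * starRingEnd ℂ (ψ (t * a' ^ 2 + s * a')) =
        ψ (t * h ^ 2 + s * h) * ψ (a' * (2 * t * h)) := by
    rw [← map_neg_eq_conj, ← map_add_eq_mul, ← map_add_eq_mul]
    congr 1
    ring
  calc (∑ a, ψ (t * a ^ 2 + s * a)) * starRingEnd ℂ (∑ a, ψ (t * a ^ 2 + s * a))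
      = ∑ a', ∑ h, ψ (t * (h + a') ^ 2 + s * (h + a')) *
          starRingEnd ℂ (ψ (t * a' ^ 2 + s * a')) := by
        rw [map_sum, sum_mul_sum, sum_comm]
        exact sum_congr rfl fun a' _ =>
          (Fintype.sum_equiv (Equiv.addRight a') _ _ fun _ => rfl).symm
    _ = ∑ h, ψ (t * h ^ 2 + s * h) * ∑ a', ψ (a' * (2 * t * h)) := by
        simp only [shift, mul_sum]
        exact sum_comm
    _ = Fintype.card R := by
        simp [sum_mulShift _ hψ, ht.mul_right_eq_zero]

lemma norm_sum_quadratic (hψ : ψ.IsPrimitive) {t : R} (ht : IsUnit (2 * t)) (s : R) :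
    ‖∑ a, ψ (t * a ^ 2 + s * a)‖ = √(Fintype.card R) := by
  have h := congrArg Complex.re (mul_conj_sum_quadratic hψ ht s)
  rw [Complex.mul_conj, Complex.ofReal_re, Complex.natCast_re, Complex.normSq_eq_norm_sq] at h
  rw [← h, Real.sqrt_sq (norm_nonneg _)]

end AddChar

namespace ZMod

lemma intCast_mul_eq_zero_iff_gcd_mul_eq_zero {c : ℕ} (v : ℤ) (z : ZMod c) :
    (v : ZMod c) * z = 0 ↔ (Int.gcd v c : ZMod c) * z = 0 := by
  obtain ⟨k, hk⟩ := Int.gcd_dvd_left (a := v) (b := c)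
  have hbezout : (Int.gcd v c : ZMod c) = v * Int.gcdA v c := by
    simpa using congrArg (Int.cast : ℤ → ZMod c) (Int.gcd_eq_gcd_ab v c)
  constructor
  · intro h
    rw [hbezout, mul_right_comm, h, zero_mul]
  · intro h
    rw [hk, Int.cast_mul, Int.cast_natCast, mul_right_comm, h, zero_mul]

variable {c : ℕ} [NeZero c]

lemma card_filter_intCast_mul_eq_zero_le (v : ℤ) :
    #{z : ZMod c | (v : ZMod c) * z = 0} ≤ Int.gcd v c := by
  have hg : 0 < Int.gcd v c := Int.gcd_pos_of_ne_zero_right _ (by exact_mod_cast NeZero.ne c)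
  simp only [intCast_mul_eq_zero_iff_gcd_mul_eq_zero, ← nsmul_eq_mul]
  exact IsAddCyclic.card_nsmul_eq_zero_le hg

lemma card_filter_intCast_mul_eq_le (v : ℤ) (u : ZMod c) :
    #{z : ZMod c | (v : ZMod c) * z = u} ≤ Int.gcd v c := by
  by_cases hu : u ∈ Set.range (AddMonoidHom.mulLeft (v : ZMod c))
  · have := AddMonoidHom.card_fiber_eq_of_mem_range (AddMonoidHom.mulLeft (v : ZMod c)) hu
      ⟨0, map_zero _⟩
    simp only [AddMonoidHom.coe_mulLeft] at this
    exact this ▸ card_filter_intCast_mul_eq_zero_le v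
  · simp only [AddMonoidHom.coe_mulLeft, Set.mem_range] at hu
    rw [filter_false_of_mem fun z _ hz => hu ⟨z, hz⟩, card_empty]
    exact Nat.zero_le _

lemma card_filter_units_intCast_mul_eq_le (v : ℤ) (u : ZMod c) :
    #{x : (ZMod c)ˣ | (v : ZMod c) * x = u} ≤ Int.gcd v c :=
  (card_le_card_of_injOn Units.val (fun _ hx => by simpa using hx)
    Units.val_injective.injOn).trans (card_filter_intCast_mul_eq_le v u)

end ZMod

section TwistedSum

open ZMod

variable {c : ℕ} [NeZero c]

lemma Sc_phase_shift {R : Type*} [CommRing R] (d u v γ x y a b : R) (hxy : x * y = 1) :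
    (a - y * b) * (γ * (a - y * b) + d) * x + b * (γ * b + d) * y +
        (2 * γ * (a - y * b) * b + (d + u) * (a - y * b) + (d + v) * b) =
      γ * x * a ^ 2 + (d * x + d + u) * a + b * (v - u * y) := by
  linear_combination (γ * y * b ^ 2 - 2 * γ * a * b - d * b) * hxy

lemma ec_eq_stdAddChar (z : ZMod c) : ec c z = stdAddChar z := by
  rw [stdAddChar_apply, toCircle_apply]
  rfl

lemma Sc_eq_sum_units_sum_sum (d u v γ : ℤ) :
    Sc c d u v γ = ∑ x : (ZMod c)ˣ, ∑ b : ZMod c, ∑ a : ZMod c,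
      stdAddChar (N := c) (a * (γ * a + d) * x + b * (γ * b + d) * ↑x⁻¹ +
        (2 * γ * a * b + (d + u) * a + (d + v) * b)) := by
  simp only [Sc, Kloos, ec_eq_stdAddChar, sum_mul, ← AddChar.map_add_eq_mul]
  exact sum_comm.trans <| (sum_congr rfl fun _ _ => sum_comm).trans sum_comm

lemma sum_sum_stdAddChar_phase (d u v γ : ℤ) (x : (ZMod c)ˣ) :
    ∑ b : ZMod c, ∑ a : ZMod c,
      stdAddChar (N := c) (a * (γ * a + d) * x + b * (γ * b + d) * ↑x⁻¹ +
        (2 * γ * a * b + (d + u) * a + (d + v) * b)) =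
    (∑ a : ZMod c, stdAddChar (N := c) (γ * x * a ^ 2 + (d * x + d + u) * a)) *
      if (v : ZMod c) * x = u then (c : ℂ) else 0 := by
  have hv : (v : ZMod c) - u * ↑x⁻¹ = 0 ↔ (v : ZMod c) * x = u := by
    rw [sub_eq_zero, Units.eq_mul_inv_iff_mul_eq]
  calc _ = ∑ b : ZMod c, ∑ a : ZMod c,
          stdAddChar (N := c) (γ * x * a ^ 2 + (d * x + d + u) * a) *
            stdAddChar (N := c) (b * ((v : ZMod c) - u * ↑x⁻¹)) := by
        refine sum_congr rfl fun b _ => ?_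
        refine (Fintype.sum_equiv (Equiv.subRight (↑x⁻¹ * b)) _ _ fun a => ?_).symm
        rw [← AddChar.map_add_eq_mul, Equiv.subRight_apply,
          Sc_phase_shift _ _ _ _ _ _ _ _ (Units.mul_inv x)]
    _ = _ := by
        rw [sum_comm, ← sum_mul_sum, AddChar.sum_mulShift _ (isPrimitive_stdAddChar c)]
        simp only [hv, ZMod.card, Nat.cast_ite, Nat.cast_zero]

lemma Sc_eq_sum_units (d u v γ : ℤ) :
    Sc c d u v γ = ∑ x : (ZMod c)ˣ,
      (∑ a : ZMod c, stdAddChar (N := c) (γ * x * a ^ 2 + (d * x + d + u) * a)) *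
        if (v : ZMod c) * x = u then (c : ℂ) else 0 := by
  rw [Sc_eq_sum_units_sum_sum]
  exact sum_congr rfl fun x _ => sum_sum_stdAddChar_phase d u v γ x

lemma norm_Sc_le_card_mul (d u v γ : ℤ) (hγ : IsUnit (2 * (γ : ZMod c))) :
    ‖Sc c d u v γ‖ ≤
      (c : ℝ) ^ ((3 : ℝ) / 2) * #{x : (ZMod c)ˣ | (v : ZMod c) * x = u} := by
  have hgauss (x : (ZMod c)ˣ) :
      ‖∑ a : ZMod c, stdAddChar (N := c) (γ * x * a ^ 2 + (d * x + d + u) * a)‖ = √c := by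
    rw [AddChar.norm_sum_quadratic (isPrimitive_stdAddChar c)
      (by simpa [mul_assoc] using hγ.mul x.isUnit), ZMod.card]
  have hpow : (c : ℝ) ^ ((3 : ℝ) / 2) = √c * c := by
    rw [show (3 : ℝ) / 2 = 1 / 2 + 1 by norm_num, Real.rpow_add (by exact_mod_cast NeZero.pos c),
      Real.rpow_one, Real.sqrt_eq_rpow]
  calc ‖Sc c d u v γ‖
      ≤ ∑ x : (ZMod c)ˣ, √c * if (v : ZMod c) * x = u then (c : ℝ) else 0 := by
        rw [Sc_eq_sum_units]
        refine (norm_sum_le _ _).trans_eq (sum_congr rfl fun x _ => ?_)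
        rw [norm_mul, hgauss, apply_ite norm, norm_zero, Complex.norm_natCast]
    _ = _ := by
        rw [← mul_sum, sum_ite, sum_const_zero, add_zero, sum_const, nsmul_eq_mul, hpow,
          mul_assoc, mul_comm (c : ℝ)]

end TwistedSum

/-- For `gcd(c, 2γ) = 1`, `|S_c(γ)| ≤ c^{3/2} · gcd(v, c)`. -/
theorem stmt_11 (d u v γ : ℤ) (c : ℕ) [NeZero c] (h : Int.gcd (c : ℤ) (2 * γ) = 1) :
    ‖Sc c d u v γ‖ ≤ (c : ℝ) ^ ((3 : ℝ) / 2) * (Int.gcd v (c : ℤ) : ℝ) := by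
  have hγ : IsUnit (2 * (γ : ZMod c)) := by
    exact_mod_cast (ZMod.coe_int_isUnit_iff_isCoprime (2 * γ) c).mpr
      (Int.isCoprime_iff_gcd_eq_one.mpr h)
  refine (norm_Sc_le_card_mul d u v γ hγ).trans ?_
  gcongr
  exact_mod_cast ZMod.card_filter_units_intCast_mul_eq_le v (u : ZMod c)
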